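/- Let σ > 0 and r ≥ 0. Then ∫₀^∞ exp(−m̄(1 − Q₁(v₀/σ, r/σ)))·(v₀/σ²)·exp(−v₀²/(2σ²)) dv₀ ≥ exp(−m̄(1 − exp(−r²/(4σ²)))). -/

import Mathlib

open Real MeasureTheory Set

noncomputable def besselI0 (x : ℝ) : ℝ :=
  (1 / Real.pi) * ∫ θ in (0:ℝ)..Real.pi, Real.exp (x * Real.cos θ)

noncomputable def ricePDF (σ ν u : ℝ) : ℝ :=
  (u / σ ^ 2) * Real.exp (-(u ^ 2 + ν ^ 2) / (2 * σ ^ 2)) * besselI0 (u * ν / σ ^ 2)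

noncomputable def marcumQ (α β : ℝ) : ℝ :=
  ∫ y in Set.Ioi β, y * Real.exp (-(y ^ 2 + α ^ 2) / 2) * besselI0 (α * y)

noncomputable def rayleighPDF (σ v : ℝ) : ℝ :=
  (v / σ ^ 2) * Real.exp (-v ^ 2 / (2 * σ ^ 2))

/-!
Jensen's inequality for the convex function `exp` under the Rayleigh law reduces the claim to
the mean of `Q₁(·, β)` against the Rayleigh density. After rescaling to `σ = 1` this mean is a
double integral; swapping the order of integration leaves the inner integral
`∫₀^∞ x e^{-a x²} I₀(t x) dx = e^{t²/(4a)} / (2a)`, which is the planar Gaussian integral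
`∫ e^{-a |p|² + t p₁} dp` computed once in Cartesian and once in polar coordinates, the angular
integral producing `I₀`. What remains is `∫_β^∞ (y/2) e^{-y²/4} dy = e^{-β²/4}`.
-/

open Filter

@[fun_prop]
lemma continuous_besselI0 : Continuous besselI0 := by
  unfold besselI0
  fun_prop

lemma besselI0_nonneg (x : ℝ) : 0 ≤ besselI0 x :=
  mul_nonneg (by positivity) (intervalIntegral.integral_nonneg pi_pos.le fun _ _ ↦ (exp_pos _).le)

lemma integral_Ioo_neg_pi_pi_exp_mul_cos (s : ℝ) :
    ∫ θ in Ioo (-π) π, exp (s * cos θ) = 2 * π * besselI0 s := by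
  have hint : ∀ a b : ℝ, IntervalIntegrable (fun θ ↦ exp (s * cos θ)) volume a b :=
    fun a b ↦ (by fun_prop : Continuous fun θ ↦ exp (s * cos θ)).intervalIntegrable a b
  have hsymm : ∫ θ in (-π)..0, exp (s * cos θ) = ∫ θ in (0)..π, exp (s * cos θ) := by
    simpa using
      (intervalIntegral.integral_comp_neg (a := 0) (b := π) fun θ ↦ exp (s * cos θ)).symm
  rw [← integral_Ioc_eq_integral_Ioo, ← intervalIntegral.integral_of_le (by linarith [pi_pos]),
    ← intervalIntegral.integral_add_adjacent_intervals (hint _ 0) (hint 0 _), hsymm, besselI0]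
  field_simp
  ring

lemma integral_exp_neg_mul_sq_add_mul {a : ℝ} (ha : 0 < a) (t : ℝ) :
    ∫ x, exp (-a * x ^ 2 + t * x) = √(π / a) * exp (t ^ 2 / (4 * a)) := by
  have hsq : ∀ x, exp (-a * x ^ 2 + t * x) =
      exp (t ^ 2 / (4 * a)) * exp (-a * (x - t / (2 * a)) ^ 2) := fun x ↦ by
    rw [← exp_add]; congr 1; field_simp; ring
  simp_rw [hsq]
  rw [integral_const_mul, integral_sub_right_eq_self (fun x ↦ exp (-a * x ^ 2)),
    integral_gaussian, mul_comm]

lemma integral_Ioi_mul_exp_neg_mul_sq {a : ℝ} (ha : 0 < a) (b : ℝ) :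
    ∫ x in Ioi b, x * exp (-a * x ^ 2) = exp (-a * b ^ 2) / (2 * a) := by
  have hderiv : ∀ x ∈ Ici b, HasDerivAt (fun x ↦ -exp (-a * x ^ 2) / (2 * a))
      (x * exp (-a * x ^ 2)) x := fun x _ ↦ by
    refine (((hasDerivAt_pow 2 x).const_mul (-a)).exp.neg.div_const (2 * a)).congr_deriv ?_
    field_simp
    ring
  have hlim : Tendsto (fun x ↦ -exp (-a * x ^ 2) / (2 * a)) atTop (nhds 0) := by
    have : Tendsto (fun x : ℝ ↦ -a * x ^ 2) atTop atBot :=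
      (tendsto_pow_atTop two_ne_zero).const_mul_atTop_of_neg (neg_neg_of_pos ha)
    simpa using (tendsto_exp_atBot.comp this).neg.div_const (2 * a)
  rw [integral_Ioi_of_hasDerivAt_of_tendsto' hderiv
    (integrable_mul_exp_neg_mul_sq ha).integrableOn hlim]
  ring

-- Both sides are `∫ exp (-a |p|² + t p.1) dp` over the plane, in polar and in Cartesian form.
lemma integral_Ioi_mul_exp_neg_mul_sq_mul_besselI0 {a : ℝ} (ha : 0 < a) (t : ℝ) :
    ∫ x in Ioi 0, x * exp (-a * x ^ 2) * besselI0 (t * x) = exp (t ^ 2 / (4 * a)) / (2 * a) := by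
  set f : ℝ × ℝ → ℝ := fun p ↦ exp (-a * p.1 ^ 2 + t * p.1) * exp (-a * p.2 ^ 2)
  have hplane : ∫ p, f p = π / a * exp (t ^ 2 / (4 * a)) := by
    rw [Measure.volume_eq_prod, integral_prod_mul (fun x ↦ exp (-a * x ^ 2 + t * x))
      (fun y ↦ exp (-a * y ^ 2)), integral_exp_neg_mul_sq_add_mul ha, integral_gaussian,
      mul_right_comm, mul_self_sqrt (by positivity)]
  set F : ℝ × ℝ → ℝ := fun p ↦ p.1 * exp (-a * p.1 ^ 2) * exp (t * p.1 * cos p.2)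
  have hpolar : ∫ p in polarCoord.target, F p = π / a * exp (t ^ 2 / (4 * a)) := by
    rw [← hplane, ← integral_comp_polarCoord_symm]
    refine setIntegral_congr_fun polarCoord.open_target.measurableSet fun p _ ↦ ?_
    simp only [F, f, polarCoord_symm_apply, smul_eq_mul, mul_assoc, ← exp_add]
    congr 2
    linear_combination a * p.1 ^ 2 * sin_sq_add_cos_sq p.2
  -- a function with nonzero integral is integrable, since non-integrable ones integrate to `0`
  have hF : IntegrableOn F (Ioi 0 ×ˢ Ioo (-π) π) := by
    rw [← polarCoord_target]
    refine Integrable.of_integral_ne_zero ?_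
    rw [hpolar]
    positivity
  have hangular : ∀ x, ∫ θ in Ioo (-π) π, F (x, θ) =
      2 * π * (x * exp (-a * x ^ 2) * besselI0 (t * x)) := fun x ↦ by
    simp only [F]
    rw [integral_const_mul, integral_Ioo_neg_pi_pi_exp_mul_cos]
    ring
  rw [polarCoord_target, Measure.volume_eq_prod, setIntegral_prod F hF] at hpolar
  simp_rw [hangular, integral_const_mul] at hpolar
  rw [← mul_right_inj' (by positivity : 2 * π ≠ 0), hpolar]
  field_simp

lemma integrableOn_Ioi_mul_exp_neg_mul_sq_mul_besselI0 {a : ℝ} (ha : 0 < a) (t : ℝ) :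
    IntegrableOn (fun x ↦ x * exp (-a * x ^ 2) * besselI0 (t * x)) (Ioi 0) :=
  Integrable.of_integral_ne_zero <| by
    rw [integral_Ioi_mul_exp_neg_mul_sq_mul_besselI0 ha]
    positivity

lemma marcumQ_integrand_eq (α y : ℝ) :
    y * exp (-(y ^ 2 + α ^ 2) / 2) * besselI0 (α * y) =
      exp (-α ^ 2 / 2) * (y * exp (-(1 / 2) * y ^ 2) * besselI0 (α * y)) := by
  rw [show -(y ^ 2 + α ^ 2) / 2 = -α ^ 2 / 2 + -(1 / 2) * y ^ 2 by ring, exp_add]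
  ring

lemma marcumQ_zero_right (α : ℝ) : marcumQ α 0 = 1 := by
  simp_rw [marcumQ, marcumQ_integrand_eq]
  rw [integral_const_mul, integral_Ioi_mul_exp_neg_mul_sq_mul_besselI0 one_half_pos,
    mul_div_assoc', ← exp_add]
  norm_num [neg_div]

lemma marcumQ_nonneg (α : ℝ) {β : ℝ} (hβ : 0 ≤ β) : 0 ≤ marcumQ α β :=
  setIntegral_nonneg measurableSet_Ioi fun y hy ↦ by
    have := besselI0_nonneg (α * y)
    have : 0 < y := hβ.trans_lt hy
    positivity

lemma marcumQ_le_one (α : ℝ) {β : ℝ} (hβ : 0 ≤ β) : marcumQ α β ≤ 1 := by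
  rw [← marcumQ_zero_right α, marcumQ, marcumQ]
  refine setIntegral_mono_set ?_ ?_ (Ioi_subset_Ioi hβ).eventuallyLE
  · simp_rw [marcumQ_integrand_eq]
    exact (integrableOn_Ioi_mul_exp_neg_mul_sq_mul_besselI0 one_half_pos α).const_mul _
  · filter_upwards [ae_restrict_mem measurableSet_Ioi] with y (hy : 0 < y)
    have := besselI0_nonneg (α * y)
    positivity

lemma measurable_marcumQ_left (β : ℝ) : Measurable fun α ↦ marcumQ α β :=
  (Continuous.stronglyMeasurable (f := fun p : ℝ × ℝ ↦
    p.2 * exp (-(p.2 ^ 2 + p.1 ^ 2) / 2) * besselI0 (p.1 * p.2))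
    (by fun_prop)).integral_prod_right'.measurable

lemma rayleighPDF_nonneg (σ : ℝ) {v : ℝ} (hv : 0 ≤ v) : 0 ≤ rayleighPDF σ v := by
  unfold rayleighPDF
  positivity

lemma rayleighPDF_one (x : ℝ) : rayleighPDF 1 x = x * exp (-(1 / 2) * x ^ 2) := by
  simp [rayleighPDF, div_eq_inv_mul]

lemma rayleighPDF_eq_inv_mul_rayleighPDF_one {σ : ℝ} (hσ : σ ≠ 0) (v : ℝ) :
    rayleighPDF σ v = σ⁻¹ * rayleighPDF 1 (v / σ) := by
  simp only [rayleighPDF]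
  field_simp

lemma integral_Ioi_rayleighPDF {σ : ℝ} (hσ : σ ≠ 0) (b : ℝ) :
    ∫ v in Ioi b, rayleighPDF σ v = exp (-b ^ 2 / (2 * σ ^ 2)) := by
  have hpos : 0 < 1 / (2 * σ ^ 2) := by positivity
  have hgauss : ∀ v, rayleighPDF σ v = (σ ^ 2)⁻¹ * (v * exp (-(1 / (2 * σ ^ 2)) * v ^ 2)) :=
    fun v ↦ by rw [rayleighPDF]; field_simp
  simp_rw [hgauss]
  rw [integral_const_mul, integral_Ioi_mul_exp_neg_mul_sq hpos]
  field_simp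

lemma integral_Ioi_comp_div_mul_rayleighPDF {σ : ℝ} (hσ : 0 < σ) (f : ℝ → ℝ) :
    ∫ v in Ioi 0, f (v / σ) * rayleighPDF σ v = ∫ x in Ioi 0, f x * rayleighPDF 1 x := by
  have := integral_comp_mul_left_Ioi (fun x ↦ f x * rayleighPDF 1 x) 0 (inv_pos.2 hσ)
  simp only [mul_zero, smul_eq_mul, inv_mul_eq_div] at this
  simp_rw [rayleighPDF_eq_inv_mul_rayleighPDF_one hσ.ne', mul_left_comm _ σ⁻¹,
    integral_const_mul, this]
  field_simp

lemma integral_Ioi_marcumQ_mul_rayleighPDF_one {β : ℝ} (hβ : 0 ≤ β) :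
    ∫ x in Ioi 0, marcumQ x β * rayleighPDF 1 x = exp (-β ^ 2 / 4) := by
  set f : ℝ → ℝ → ℝ := fun x y ↦ y * exp (-(1 / 2) * y ^ 2) *
    (x * exp (-1 * x ^ 2) * besselI0 (y * x))
  have hsection : ∀ x, marcumQ x β * rayleighPDF 1 x = ∫ y in Ioi β, f x y := fun x ↦ by
    rw [marcumQ, rayleighPDF_one, ← integral_mul_const]
    refine integral_congr_ae (ae_of_all _ fun y ↦ ?_)
    simp only [f, mul_comm x y]
    rw [show -(y ^ 2 + x ^ 2) / 2 = -(1 / 2) * y ^ 2 + -(1 / 2) * x ^ 2 by ring,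
      show -1 * x ^ 2 = -(1 / 2) * x ^ 2 + -(1 / 2) * x ^ 2 by ring, exp_add, exp_add]
    ring
  have hinner : ∀ y, ∫ x in Ioi 0, f x y = 1 / 2 * (y * exp (-(1 / 4) * y ^ 2)) := fun y ↦ by
    rw [integral_const_mul, integral_Ioi_mul_exp_neg_mul_sq_mul_besselI0 one_pos, mul_div_assoc',
      mul_assoc, ← exp_add]
    ring_nf
  have hf : Integrable (Function.uncurry f)
      ((volume.restrict (Ioi 0)).prod (volume.restrict (Ioi β))) := by
    refine (integrable_prod_iff'
      (by fun_prop : Continuous (Function.uncurry f)).aestronglyMeasurable).2 ⟨?_, ?_⟩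
    · exact ae_of_all _ fun y ↦
        (integrableOn_Ioi_mul_exp_neg_mul_sq_mul_besselI0 one_pos y).const_mul
          (y * exp (-(1 / 2) * y ^ 2))
    · refine (((integrable_mul_exp_neg_mul_sq (by norm_num : (0:ℝ) < 1 / 4)).const_mul
        (1 / 2)).restrict).congr ?_
      filter_upwards [ae_restrict_mem measurableSet_Ioi] with y (hy : β < y)
      rw [← hinner]
      refine setIntegral_congr_fun measurableSet_Ioi fun x (hx : 0 < x) ↦ ?_
      have := besselI0_nonneg (y * x)
      have : 0 < y := hβ.trans_lt hy
      exact (norm_of_nonneg (by positivity)).symm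
  simp_rw [hsection]
  rw [integral_integral_swap hf, setIntegral_congr_fun measurableSet_Ioi fun y _ ↦ hinner y,
    integral_const_mul, integral_Ioi_mul_exp_neg_mul_sq (by norm_num)]
  ring_nf

lemma exp_integral_mul_le_integral_exp_mul {Ω : Type*} [MeasurableSpace Ω] {μ : Measure Ω}
    {w g : Ω → ℝ} (hw : 0 ≤ᵐ[μ] w) (hw_one : ∫ x, w x ∂μ = 1)
    (hgw : Integrable (fun x ↦ g x * w x) μ) (hegw : Integrable (fun x ↦ exp (g x) * w x) μ) :
    exp (∫ x, g x * w x ∂μ) ≤ ∫ x, exp (g x) * w x ∂μ := by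
  set c := ∫ x, g x * w x ∂μ
  have hw_int : Integrable w μ := .of_integral_ne_zero (by rw [hw_one]; exact one_ne_zero)
  -- integrate the tangent line of `exp` at `c` against `w`
  have htangent : ∀ u, exp c * (u - c + 1) ≤ exp u := fun u ↦ by
    simpa [← exp_add] using mul_le_mul_of_nonneg_left (add_one_le_exp (u - c)) (exp_pos c).le
  calc exp c = ∫ x, exp c * ((g x * w x - c * w x) + w x) ∂μ := by
        rw [integral_const_mul,
          integral_add (f := fun x ↦ g x * w x - c * w x) (hgw.sub (hw_int.const_mul c)) hw_int,
          integral_sub hgw (hw_int.const_mul c), integral_const_mul, hw_one]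
        ring
    _ ≤ ∫ x, exp (g x) * w x ∂μ := by
        refine integral_mono_ae (by fun_prop) hegw ?_
        filter_upwards [hw] with x hx
        calc exp c * ((g x * w x - c * w x) + w x) = exp c * (g x - c + 1) * w x := by ring
          _ ≤ exp (g x) * w x := mul_le_mul_of_nonneg_right (htangent _) hx

lemma exp_le_integral_exp_marcumQ_mul_rayleighPDF_one (m : ℝ) {β : ℝ} (hβ : 0 ≤ β) :
    exp (-m * (1 - exp (-β ^ 2 / 4))) ≤
      ∫ x in Ioi 0, exp (-m * (1 - marcumQ x β)) * rayleighPDF 1 x := by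
  set w := rayleighPDF 1
  set Q : ℝ → ℝ := fun x ↦ marcumQ x β
  have hw : 0 ≤ᵐ[volume.restrict (Ioi 0)] w :=
    (ae_restrict_mem measurableSet_Ioi).mono fun x (hx : 0 < x) ↦ rayleighPDF_nonneg 1 hx.le
  have hw_one : ∫ x in Ioi 0, w x = 1 := by
    simp [w, integral_Ioi_rayleighPDF one_ne_zero]
  have hw_int : IntegrableOn w (Ioi 0) := .of_integral_ne_zero (by rw [hw_one]; exact one_ne_zero)
  have hQ_meas : AEStronglyMeasurable Q (volume.restrict (Ioi 0)) :=
    (measurable_marcumQ_left β).aestronglyMeasurable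
  have hQw : IntegrableOn (fun x ↦ Q x * w x) (Ioi 0) :=
    hw_int.bdd_mul hQ_meas (ae_of_all _ fun x ↦ by
      rw [norm_of_nonneg (marcumQ_nonneg x hβ)]; exact marcumQ_le_one x hβ)
  have hgw : IntegrableOn (fun x ↦ -m * (1 - Q x) * w x) (Ioi 0) :=
    ((hw_int.sub hQw).const_mul (-m)).congr
      (ae_of_all _ fun x ↦ by simp only [Pi.sub_apply]; ring)
  have hegw : IntegrableOn (fun x ↦ exp (-m * (1 - Q x)) * w x) (Ioi 0) :=
    hw_int.bdd_mul (c := exp |m|) (by fun_prop) (ae_of_all _ fun x ↦ by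
      have := marcumQ_nonneg x hβ
      have := marcumQ_le_one x hβ
      rw [norm_of_nonneg (exp_pos _).le, exp_le_exp]
      nlinarith [neg_abs_le m, abs_nonneg m])
  have hmean : ∫ x in Ioi 0, -m * (1 - Q x) * w x = -m * (1 - exp (-β ^ 2 / 4)) := by
    calc ∫ x in Ioi 0, -m * (1 - Q x) * w x
        = -m * ((∫ x in Ioi 0, w x) - ∫ x in Ioi 0, Q x * w x) := by
          rw [← integral_sub hw_int hQw, ← integral_const_mul]
          exact integral_congr_ae (ae_of_all _ fun x ↦ by ring)
      _ = _ := by rw [hw_one, integral_Ioi_marcumQ_mul_rayleighPDF_one hβ]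
  rw [← hmean]
  exact exp_integral_mul_le_integral_exp_mul hw hw_one hgw hegw

theorem jensen_rayleigh_marcum_bound_general (m σ r : ℝ) (hσ : 0 < σ) (hr : 0 ≤ r) :
    Real.exp (-m * (1 - Real.exp (-r ^ 2 / (4 * σ ^ 2)))) ≤
      ∫ v in Set.Ioi (0:ℝ),
        Real.exp (-m * (1 - marcumQ (v / σ) (r / σ))) * rayleighPDF σ v := by
  have hexponent : -(r / σ) ^ 2 / 4 = -r ^ 2 / (4 * σ ^ 2) := by
    field_simp
  rw [integral_Ioi_comp_div_mul_rayleighPDF hσ fun x ↦ exp (-m * (1 - marcumQ x (r / σ))),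
    ← hexponent]
  exact exp_le_integral_exp_marcumQ_mul_rayleighPDF_one m
    (div_nonneg hr hσ.le)

theorem jensen_rayleigh_marcum_bound (m σ r : ℝ) (hm : 0 < m) (hσ : 0 < σ) (hr : 0 ≤ r) :
    Real.exp (-m * (1 - Real.exp (-r ^ 2 / (4 * σ ^ 2)))) ≤
      ∫ v in Set.Ioi (0:ℝ),
        Real.exp (-m * (1 - marcumQ (v / σ) (r / σ))) * rayleighPDF σ v :=
  jensen_rayleigh_marcum_bound_general m σ r hσ hr
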